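/- Let C > 0, D > 0, κ ≥ 0, −1 < ν < 1/2, and define α₁ = Cν, α₂ = α₃ = C(1−ν)/2, α₄ = C(1−ν)κ/2, β₁ = −D(1−ν)/2, β₂ = −Dν, β₃ = D, β₄ = 0. Then the quadratic form Q(E, e, K, k) = α₁(trace E)² + α₂ trace(E²) + α₃ ‖E‖² + α₄ ‖e‖² + β₁(trace K)² + β₂ trace(K²) + β₃ ‖K‖² + β₄ ‖k‖² is not positive definite: there exists (E, e, K, k) ≠ 0 with Q(E, e, K, k) = 0; in particular Q(!![0,1;-1,0], 0, 0, 0) = 0. (Remark 5: for shells without drilling rotations, α₃ − α₂ = 0, 2β₁ + β₂ + β₃ = 0 and β₄ = 0, so the strain energy (46) is only positive semi-definite and the existence theorem for 6-parameter shells does not apply.) -/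

import Mathlib

open Matrix

/-- Squared Frobenius norm `‖X‖² = tr(XᵀX)`. -/
def frobSq (X : Matrix (Fin 2) (Fin 2) ℝ) : ℝ := trace (Xᵀ * X)

/-- Twice the strain energy density (46) with the no-drill coefficients (47):
`α₁ = Cν`, `α₂ = α₃ = C(1−ν)/2`, `α₄ = C(1−ν)κ/2`, `β₁ = −D(1−ν)/2`, `β₂ = −Dν`,
`β₃ = D`, `β₄ = 0`. -/
noncomputable def Qform (C D κ ν : ℝ) (E : Matrix (Fin 2) (Fin 2) ℝ) (e : Fin 2 → ℝ)
    (K : Matrix (Fin 2) (Fin 2) ℝ) (k : Fin 2 → ℝ) : ℝ :=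
  (C * ν) * (trace E) ^ 2 + (C * (1 - ν) / 2) * trace (E * E)
    + (C * (1 - ν) / 2) * frobSq E + (C * (1 - ν) * κ / 2) * (e ⬝ᵥ e)
    + (-(D * (1 - ν) / 2)) * (trace K) ^ 2 + (-(D * ν)) * trace (K * K)
    + D * frobSq K + (0 : ℝ) * (k ⬝ᵥ k)

/-!
Since `α₂ = α₃`, the membrane part `α₂ tr(E²) + α₃ ‖E‖²` equals `α₂ tr(E(E + Eᵀ))`, which only sees
the symmetric part of `E`; `α₁ (tr E)²` does not see the skew part either. Hence every skew-symmetric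
membrane strain, e.g. `!![0, 1; -1, 0]`, has zero energy.
-/

namespace Matrix

variable {n R : Type*} [Fintype n]

theorem trace_eq_zero_of_transpose_eq_neg [AddCommGroup R] [IsAddTorsionFree R]
    {A : Matrix n n R} (hA : Aᵀ = -A) : trace A = 0 := by
  have h := trace_transpose A
  rw [hA, trace_neg] at h
  exact self_eq_neg.mp h.symm

theorem trace_transpose_mul_self_of_transpose_eq_neg [Ring R] {A : Matrix n n R}
    (hA : Aᵀ = -A) : trace (Aᵀ * A) = -trace (A * A) := by
  rw [hA, Matrix.neg_mul, trace_neg]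

end Matrix

theorem Qform_zero_right (C D κ ν : ℝ) (E : Matrix (Fin 2) (Fin 2) ℝ) :
    Qform C D κ ν E 0 0 0 = C * ν * trace E ^ 2 + C * (1 - ν) / 2 * (trace (E * E) + frobSq E) := by
  simp only [Qform, frobSq, dotProduct_zero, trace_zero, mul_zero, transpose_zero]
  ring

theorem Qform_eq_zero_of_transpose_eq_neg (C D κ ν : ℝ) {E : Matrix (Fin 2) (Fin 2) ℝ}
    (hE : Eᵀ = -E) : Qform C D κ ν E 0 0 0 = 0 := by
  rw [Qform_zero_right, frobSq, trace_eq_zero_of_transpose_eq_neg hE,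
    trace_transpose_mul_self_of_transpose_eq_neg hE]
  ring

theorem no_drill_energy_not_positive_definite
    (C D κ ν : ℝ) :
    (∃ (E : Matrix (Fin 2) (Fin 2) ℝ) (e : Fin 2 → ℝ)
        (K : Matrix (Fin 2) (Fin 2) ℝ) (k : Fin 2 → ℝ),
      ¬(E = 0 ∧ e = 0 ∧ K = 0 ∧ k = 0) ∧ Qform C D κ ν E e K k = 0) ∧
    Qform C D κ ν !![0, 1; -1, 0] 0 0 0 = 0 := by
  set J : Matrix (Fin 2) (Fin 2) ℝ := !![0, 1; -1, 0]
  have hJ_skew : Jᵀ = -J := by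
    ext i j
    fin_cases i <;> fin_cases j <;> simp [J]
  have hJ_ne : J ≠ 0 := fun h => by simpa [J] using congrFun (congrFun h 0) 1
  have hQ : Qform C D κ ν J 0 0 0 = 0 := Qform_eq_zero_of_transpose_eq_neg C D κ ν hJ_skew
  exact ⟨⟨J, 0, 0, 0, fun h => hJ_ne h.1, hQ⟩, hQ⟩
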